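/- arXiv:1310.0699 — 3 statements merged into one kernel-verified Lean document; each statement's English description precedes it below -/
import Mathlib

section
/- Let α ≠ 0 and β, λ, μ be real constants, and let G : ℝ → ℝ be smooth, nowhere zero, satisfying G'' + λG' + μG = 0. Let α₀, α₁, ω be real numbers satisfying (α/2)α₁² = βα₁, αα₀α₁ − ωα₁ − βα₁λ = 0 and −ωα₀ + (α/2)α₀² − βα₁μ = 0. Then the function U = α₁(G'/G) + α₀ satisfies −ωU + (α/2)U² + βU' = 0. -/
theorem stmt_9 (α β lam mu ω a0 a1 : ℝ) (hα : α ≠ 0) (G : ℝ → ℝ)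
    (hG : ContDiff ℝ (⊤ : ℕ∞) G) (hne : ∀ ξ : ℝ, G ξ ≠ 0)
    (hode : ∀ ξ : ℝ, deriv (deriv G) ξ + lam * deriv G ξ + mu * G ξ = 0)
    (h1 : -ω * a0 + (α / 2) * a0 ^ 2 - β * a1 * mu = 0)
    (h2 : -ω * a1 + α * a0 * a1 - β * a1 * lam = 0)
    (h3 : (α / 2) * a1 ^ 2 - β * a1 = 0)
    (U : ℝ → ℝ) (hUdef : ∀ ξ : ℝ, U ξ = a1 * (deriv G ξ / G ξ) + a0) :
    ∀ ξ : ℝ, -ω * U ξ + (α / 2) * U ξ ^ 2 + β * deriv U ξ = 0 := by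
  have hU : U = fun ξ => a1 * (deriv G ξ / G ξ) + a0 := funext hUdef
  have hGi : ContDiff ℝ (↑(⊤ : ℕ∞)) G := hG.of_le (by simp)
  have hG' : Differentiable ℝ (deriv G) :=
    ((contDiff_infty_iff_deriv.mp hGi).2).differentiable (by simp)
  intro ξ
  have hg : HasDerivAt G (deriv G ξ) ξ := (hG.differentiable (by simp) ξ).hasDerivAt
  have hg' : HasDerivAt (deriv G) (deriv (deriv G) ξ) ξ := (hG' ξ).hasDerivAt
  have hdU : HasDerivAt U (a1 * ((deriv (deriv G) ξ * G ξ - deriv G ξ * deriv G ξ) / G ξ ^ 2)) ξ := by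
    rw [hU]
    exact (((hg'.div hg (hne ξ)).const_mul a1).add_const a0)
  rw [hdU.deriv, hUdef ξ]
  have h2' : deriv (deriv G) ξ = -(lam * deriv G ξ) - mu * G ξ := by linarith [hode ξ]
  rw [h2']
  have hg0 := hne ξ
  field_simp
  linear_combination (2 * deriv G ξ ^ 2) * h3 + (2 * deriv G ξ * G ξ) * h2 +
    (2 * G ξ ^ 2) * h1
end

section
/- Let α ≠ 0, γ, λ, μ ∈ ℝ and let G : ℝ → ℝ be smooth, nowhere zero, with G'' + λG' + μG = 0. Set ω = −γ(4μ − λ²), α₀ = −12γμ/α, α₁ = −12γλ/α, α₂ = −12γ/α, and U = α₂(G'/G)² + α₁(G'/G) + α₀. Then U satisfies the integrated KdV ODE −ωU + (α/2)U² + γU'' = 0. -/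
theorem stmt_15 (α γ lam mu : ℝ) (hα : α ≠ 0) (G : ℝ → ℝ)
    (hG : ContDiff ℝ (⊤ : ℕ∞) G) (hne : ∀ ξ : ℝ, G ξ ≠ 0)
    (hode : ∀ ξ : ℝ, deriv (deriv G) ξ + lam * deriv G ξ + mu * G ξ = 0)
    (U : ℝ → ℝ)
    (hUdef : ∀ ξ : ℝ, U ξ = (-(12 * γ) / α) * (deriv G ξ / G ξ) ^ 2 +
      (-(12 * γ * lam) / α) * (deriv G ξ / G ξ) + (-(12 * γ * mu) / α)) :
    ∀ ξ : ℝ, -(-(γ * (4 * mu - lam ^ 2))) * U ξ + (α / 2) * U ξ ^ 2 +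
      γ * deriv (deriv U) ξ = 0 := by
  set H : ℝ → ℝ := fun x => deriv G x / G x with hHdef
  have hGinf : ContDiff ℝ ((⊤ : ℕ∞) : WithTop ℕ∞) G := hG.of_le (by simp)
  have hG' : ContDiff ℝ ((⊤ : ℕ∞) : WithTop ℕ∞) (deriv G) := (contDiff_infty_iff_deriv.mp hGinf).2
  have hGd : Differentiable ℝ G := hG.differentiable (by simp)
  have hG'd : Differentiable ℝ (deriv G) := hG'.differentiable (by simp)
  have hHder : ∀ x : ℝ, HasDerivAt H (-((H x)^2 + lam * H x + mu)) x := by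
    intro x
    have h := ((hG'd x).hasDerivAt.div (hGd x).hasDerivAt (hne x))
    refine h.congr_deriv ?_
    have e : deriv (deriv G) x = -(lam * deriv G x + mu * G x) := by
      linarith [hode x]
    rw [e]
    have hx := hne x
    simp only [hHdef]
    field_simp [hHdef]
    ring
  have key : ∀ (a b c : ℝ) (x : ℝ),
      HasDerivAt (fun y => a * (H y)^3 + b * (H y)^2 + c * (H y))
        ((3 * a * (H x)^2 + 2 * b * (H x) + c) * (-((H x)^2 + lam * H x + mu))) x := by
    intro a b c x
    have h := hHder x
    have h3 := ((h.pow 3).const_mul a)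
    have h2 := ((h.pow 2).const_mul b)
    have h1 := (h.const_mul c)
    refine ((h3.add h2).add h1).congr_deriv ?_
    push_cast
    ring
  set k : ℝ := -(12 * γ) / α with hk
  have hUeq : U = fun y => (0 * (H y)^3 + k * (H y)^2 + (k * lam) * (H y)) +
      (-(12 * γ * mu) / α) := by
    funext y
    rw [hUdef y]
    simp only [hHdef, hk]
    ring
  have hU' : ∀ x : ℝ, deriv U x =
      (3 * 0 * (H x)^2 + 2 * k * (H x) + k * lam) * (-((H x)^2 + lam * H x + mu)) := by
    intro x
    rw [hUeq]
    exact ((key 0 k (k * lam) x).add_const _).deriv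
  have hU'eq : deriv U = fun y => (-2*k) * (H y)^3 + (-3*k*lam) * (H y)^2 +
      (-(k*lam^2 + 2*k*mu)) * (H y) + (-(k*lam*mu)) := by
    funext y
    rw [hU' y]
    ring
  intro ξ
  have hU'' : deriv (deriv U) ξ =
      (3 * (-2*k) * (H ξ)^2 + 2 * (-3*k*lam) * (H ξ) + (-(k*lam^2 + 2*k*mu))) *
        (-((H ξ)^2 + lam * H ξ + mu)) := by
    rw [hU'eq]
    exact ((key (-2*k) (-3*k*lam) (-(k*lam^2 + 2*k*mu)) ξ).add_const _).deriv
  rw [hU'', hUdef ξ]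
  show -(-(γ * (4 * mu - lam ^ 2))) * ((-(12 * γ) / α) * (H ξ) ^ 2 +
      (-(12 * γ * lam) / α) * (H ξ) + (-(12 * γ * mu) / α)) + (α / 2) * ((-(12 * γ) / α) * (H ξ) ^ 2 +
      (-(12 * γ * lam) / α) * (H ξ) + (-(12 * γ * mu) / α)) ^ 2 + γ * _ = 0
  rw [hk]
  field_simp
  ring
end

section
/- Let k ≠ 0, α, s, λ, μ ∈ ℝ and let G : ℝ → ℝ be smooth, nowhere zero, with G'' + λG' + μG = 0. Set ω = (4k⁴μ − 3sα² − k⁴λ²)/k, and define U = −2k²(G'/G)² − 2k²λ(G'/G) − 2k²μ. Then U satisfies the integrated KP ODE (kω + 3sα²)U + 3k²U² + k⁴U'' = 0 (the twice-integrated form with zero integration constants). -/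
theorem stmt_19 (k α s lam mu : ℝ) (hk : k ≠ 0) (G : ℝ → ℝ)
    (hG : ContDiff ℝ (⊤ : ℕ∞) G) (hne : ∀ ξ : ℝ, G ξ ≠ 0)
    (hode : ∀ ξ : ℝ, deriv (deriv G) ξ + lam * deriv G ξ + mu * G ξ = 0)
    (ω : ℝ) (hω : ω = (4 * k ^ 4 * mu - 3 * s * α ^ 2 - k ^ 4 * lam ^ 2) / k)
    (U : ℝ → ℝ)
    (hUdef : ∀ ξ : ℝ, U ξ = -(2 * k ^ 2) * (deriv G ξ / G ξ) ^ 2 -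
      2 * k ^ 2 * lam * (deriv G ξ / G ξ) - 2 * k ^ 2 * mu) :
    ∀ ξ : ℝ, (k * ω + 3 * s * α ^ 2) * U ξ + 3 * k ^ 2 * U ξ ^ 2 +
      k ^ 4 * deriv (deriv U) ξ = 0 := by
  have hG1 : Differentiable ℝ G := hG.differentiable (by simp)
  have hG' : ContDiff ℝ ((⊤ : ℕ∞) : WithTop ℕ∞) G := hG.of_le (by simp)
  have hGtop := (contDiff_infty_iff_deriv.mp hG').2
  have hG2 : Differentiable ℝ (deriv G) := hGtop.differentiable (by simp)
  set h : ℝ → ℝ := fun x => deriv G x / G x with hhdef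
  have hhd : ∀ x, HasDerivAt h (-(h x ^ 2 + lam * h x + mu)) x := by
    intro x
    have h1 : HasDerivAt G (deriv G x) x := (hG1 x).hasDerivAt
    have h2 : HasDerivAt (deriv G) (deriv (deriv G) x) x := (hG2 x).hasDerivAt
    have hd := h2.div h1 (hne x)
    refine hd.congr_deriv ?_
    have hod := hode x
    have hGx := hne x
    field_simp [hhdef]
    have hhx : h x = deriv G x / G x := rfl
    rw [hhx]
    field_simp
    linear_combination (G x) * hod
  set P : ℝ → ℝ := fun x => h x ^ 2 + lam * h x + mu with hPdef
  have hPd : ∀ x, HasDerivAt P (-((2 * h x + lam) * P x)) x := by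
    intro x
    have := (((hhd x).pow 2).add ((hhd x).const_mul lam)).add_const mu
    refine this.congr_deriv ?_
    simp [hPdef]; ring
  have hU : U = fun x => -2 * k ^ 2 * P x := by
    funext x; rw [hUdef x]; simp only [hPdef, hhdef]; ring
  have hUd : ∀ x, HasDerivAt U (-2 * k ^ 2 * -((2 * h x + lam) * P x)) x := by
    intro x; rw [hU]; exact (hPd x).const_mul _
  have hU' : deriv U = fun x => -2 * k ^ 2 * -((2 * h x + lam) * P x) := by
    funext x; exact (hUd x).deriv
  have hkω : k * ω = 4 * k ^ 4 * mu - 3 * s * α ^ 2 - k ^ 4 * lam ^ 2 := by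
    rw [hω]; field_simp
  intro ξ
  have hU2 : deriv (deriv U) ξ =
      -2 * k ^ 2 * -((2 * -(h ξ ^ 2 + lam * h ξ + mu)) * P ξ
        + (2 * h ξ + lam) * -((2 * h ξ + lam) * P ξ)) := by
    rw [hU']
    have hd : HasDerivAt (fun x => -2 * k ^ 2 * -((2 * h x + lam) * P x))
        (-2 * k ^ 2 * -((2 * -(h ξ ^ 2 + lam * h ξ + mu)) * P ξ
          + (2 * h ξ + lam) * -((2 * h ξ + lam) * P ξ))) ξ := by
      have := (((((hhd ξ).const_mul 2).add_const lam).mul (hPd ξ)).neg).const_mul (-2 * k ^ 2)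
      exact this
    exact hd.deriv
  rw [hUdef ξ, hU2, hkω]
  simp only [hPdef, hhdef]
  ring
end
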